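/- Let n ≥ 2. Let D = diag(1,0,...,0) and D̂ = diag(1/2,1/2,0,...,0) be n×n real diagonal matrices, and let L : H_n → ℝ⁴ be the linear map L(X) = (tr(PX), tr(QX), tr(RX), tr(SX)), where P, Q, R, S are the n×n Hermitian matrices that are zero outside the leading 2×2 block and whose leading 2×2 blocks are [[1,0],[0,1]], [[0,i],[−i,0]], [[1,0],[0,−1]], and [[0,1],[1,0]] respectively. Then D̂ ≺ D, the point (1,0,0,0) belongs to W_L(D̂), but (1,0,0,0) does not belong to W_L(D). In particular, the inclusion W_L(D̂) ⊆ W_L(D) can fail for linear maps into ℝ⁴. -/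
import Mathlib


open Matrix

/-- An `n × n` real matrix is a pinching matrix if for some `s < t` and `α ∈ [0,1]` its
`(s,s)` and `(t,t)` entries are `α`, its `(s,t)` and `(t,s)` entries are `1 − α`, the
remaining diagonal entries are `1`, and all other entries vanish. -/
def IsPinching {n : ℕ} (P : Matrix (Fin n) (Fin n) ℝ) : Prop :=
  ∃ s t : Fin n, s < t ∧ ∃ α ∈ Set.Icc (0 : ℝ) 1,
    P = Matrix.of fun i j =>
      if i = s ∧ j = s then α
      else if i = t ∧ j = t then α
      else if i = s ∧ j = t then 1 - α
      else if i = t ∧ j = s then 1 - α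
      else if i = j then 1 else 0

/-- `diag(dhat) ≺ diag(d)`: there are finitely many pinching matrices `P₁, ..., P_k` with
`dhat = P₁P₂⋯P_k d`. -/
def PinchPrec {n : ℕ} (dhat d : Fin n → ℝ) : Prop :=
  ∃ Ps : List (Matrix (Fin n) (Fin n) ℝ),
    (∀ P ∈ Ps, IsPinching P) ∧ dhat = Ps.prod *ᵥ d

/-- `P = [[1,0],[0,1]] ⊕ 0`. -/
def Pmat (n : ℕ) : Matrix (Fin n) (Fin n) ℂ :=
  Matrix.of fun i j =>
    if (i : ℕ) = 0 ∧ (j : ℕ) = 0 then 1 else if (i : ℕ) = 1 ∧ (j : ℕ) = 1 then 1 else 0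

/-- `Q = [[0,i],[−i,0]] ⊕ 0`. -/
def Qmat (n : ℕ) : Matrix (Fin n) (Fin n) ℂ :=
  Matrix.of fun i j =>
    if (i : ℕ) = 0 ∧ (j : ℕ) = 1 then Complex.I
    else if (i : ℕ) = 1 ∧ (j : ℕ) = 0 then -Complex.I else 0

/-- `R = [[1,0],[0,−1]] ⊕ 0`. -/
def Rmat (n : ℕ) : Matrix (Fin n) (Fin n) ℂ :=
  Matrix.of fun i j =>
    if (i : ℕ) = 0 ∧ (j : ℕ) = 0 then 1 else if (i : ℕ) = 1 ∧ (j : ℕ) = 1 then -1 else 0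

/-- `S = [[0,1],[1,0]] ⊕ 0`. -/
def Smat (n : ℕ) : Matrix (Fin n) (Fin n) ℂ :=
  Matrix.of fun i j =>
    if (i : ℕ) = 0 ∧ (j : ℕ) = 1 then 1 else if (i : ℕ) = 1 ∧ (j : ℕ) = 0 then 1 else 0

/-- The `L`-numerical range of `A ∈ H_n` for the specific linear map
`L(X) = (tr(PX), tr(QX), tr(RX), tr(SX)) : H_n → ℝ⁴`. -/
noncomputable def WL6 (n : ℕ) (A : Matrix (Fin n) (Fin n) ℂ) : Set (Fin 4 → ℝ) :=
  {y | ∃ U ∈ Matrix.unitaryGroup (Fin n) ℂ,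
    y = ![(Matrix.trace (Pmat n * (Uᴴ * A * U))).re,
          (Matrix.trace (Qmat n * (Uᴴ * A * U))).re,
          (Matrix.trace (Rmat n * (Uᴴ * A * U))).re,
          (Matrix.trace (Smat n * (Uᴴ * A * U))).re]}


section AuxStmt6

lemma sum_two {n : ℕ} (hn : 2 ≤ n) (g : Fin n → ℂ)
    (hg : ∀ i : Fin n, (i : ℕ) ≠ 0 → (i : ℕ) ≠ 1 → g i = 0) :
    ∑ i, g i = g ⟨0, by omega⟩ + g ⟨1, by omega⟩ := by
  classical
  have h1 : ∑ i ∈ ({⟨0, by omega⟩, ⟨1, by omega⟩} : Finset (Fin n)), g i = ∑ i, g i := by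
    refine Finset.sum_subset (Finset.subset_univ _) ?_
    intro i _ hi
    simp only [Finset.mem_insert, Finset.mem_singleton] at hi
    push_neg at hi
    exact hg i (fun h => hi.1 (Fin.ext h)) (fun h => hi.2 (Fin.ext h))
  rw [← h1, Finset.sum_pair (by simp [Fin.ext_iff])]

lemma trace_mul_special {n : ℕ} (hn : 2 ≤ n) (M B : Matrix (Fin n) (Fin n) ℂ)
    (hM : ∀ i j : Fin n, ((i:ℕ) ≠ 0 ∧ (i:ℕ) ≠ 1) ∨ ((j:ℕ) ≠ 0 ∧ (j:ℕ) ≠ 1) → M i j = 0) :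
    Matrix.trace (M * B) =
      M ⟨0, by omega⟩ ⟨0, by omega⟩ * B ⟨0, by omega⟩ ⟨0, by omega⟩
      + M ⟨0, by omega⟩ ⟨1, by omega⟩ * B ⟨1, by omega⟩ ⟨0, by omega⟩
      + M ⟨1, by omega⟩ ⟨0, by omega⟩ * B ⟨0, by omega⟩ ⟨1, by omega⟩
      + M ⟨1, by omega⟩ ⟨1, by omega⟩ * B ⟨1, by omega⟩ ⟨1, by omega⟩ := by
  rw [Matrix.trace]
  simp only [Matrix.diag, Matrix.mul_apply]
  rw [sum_two hn _ (fun i h0 h1 => Finset.sum_eq_zero fun j _ => by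
      rw [hM i j (Or.inl ⟨h0, h1⟩), zero_mul])]
  rw [sum_two hn _ (fun j h0 h1 => by rw [hM _ j (Or.inr ⟨h0, h1⟩), zero_mul]),
      sum_two hn _ (fun j h0 h1 => by rw [hM _ j (Or.inr ⟨h0, h1⟩), zero_mul])]
  ring

lemma B_entry {n : ℕ} (hn : 2 ≤ n) (U : Matrix (Fin n) (Fin n) ℂ)
    (c : Fin n → ℂ) (hc : ∀ k : Fin n, (k : ℕ) ≠ 0 → c k = 0) (i j : Fin n) :
    (Uᴴ * Matrix.diagonal c * U) i j
      = star (U ⟨0, by omega⟩ i) * c ⟨0, by omega⟩ * U ⟨0, by omega⟩ j := by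
  rw [Matrix.mul_assoc, Matrix.mul_apply]
  have : ∀ k : Fin n, Uᴴ i k * (Matrix.diagonal c * U) k j
      = star (U k i) * c k * U k j := by
    intro k
    rw [Matrix.diagonal_mul, Matrix.conjTranspose_apply]
    ring
  simp only [this]
  refine Finset.sum_eq_single (⟨0, by omega⟩ : Fin n) (fun b _ hb => ?_) (by simp)
  rw [hc b (fun h => hb (Fin.ext h))]
  ring

lemma suppP (n : ℕ) : ∀ i j : Fin n,
    ((i:ℕ) ≠ 0 ∧ (i:ℕ) ≠ 1) ∨ ((j:ℕ) ≠ 0 ∧ (j:ℕ) ≠ 1) → Pmat n i j = 0 := by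
  intro i j h; simp only [Pmat, Matrix.of_apply]; split_ifs <;> tauto

lemma suppQ (n : ℕ) : ∀ i j : Fin n,
    ((i:ℕ) ≠ 0 ∧ (i:ℕ) ≠ 1) ∨ ((j:ℕ) ≠ 0 ∧ (j:ℕ) ≠ 1) → Qmat n i j = 0 := by
  intro i j h; simp only [Qmat, Matrix.of_apply]; split_ifs <;> tauto

lemma suppR (n : ℕ) : ∀ i j : Fin n,
    ((i:ℕ) ≠ 0 ∧ (i:ℕ) ≠ 1) ∨ ((j:ℕ) ≠ 0 ∧ (j:ℕ) ≠ 1) → Rmat n i j = 0 := by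
  intro i j h; simp only [Rmat, Matrix.of_apply]; split_ifs <;> tauto

lemma suppS (n : ℕ) : ∀ i j : Fin n,
    ((i:ℕ) ≠ 0 ∧ (i:ℕ) ≠ 1) ∨ ((j:ℕ) ≠ 0 ∧ (j:ℕ) ≠ 1) → Smat n i j = 0 := by
  intro i j h; simp only [Smat, Matrix.of_apply]; split_ifs <;> tauto

end AuxStmt6

/-- For `D = diag(1,0,...,0)` and `D̂ = diag(1/2,1/2,0,...,0)` one has `D̂ ≺ D` and
`(1,0,0,0) ∈ W_L(D̂)` but `(1,0,0,0) ∉ W_L(D)`: the inclusion `W_L(D̂) ⊆ W_L(D)` fails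
for linear maps into `ℝ⁴`. -/
theorem stmt6 {n : ℕ} (hn : 2 ≤ n)
    (d : Fin n → ℝ) (hd : d = fun j : Fin n => if (j : ℕ) = 0 then (1 : ℝ) else 0)
    (dhat : Fin n → ℝ)
    (hdhat : dhat = fun j : Fin n => if (j : ℕ) = 0 ∨ (j : ℕ) = 1 then (1 / 2 : ℝ) else 0) :
    PinchPrec dhat d ∧
      ![1, 0, 0, 0] ∈ WL6 n (Matrix.diagonal fun j => (dhat j : ℂ)) ∧
      ![1, 0, 0, 0] ∉ WL6 n (Matrix.diagonal fun j => (d j : ℂ)) := by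
  refine ⟨?_, ?_, ?_⟩
  · -- PinchPrec dhat d
    subst hd hdhat
    have h0 : 0 < n := by omega
    have h1 : 1 < n := by omega
    refine ⟨[Matrix.of fun i j : Fin n =>
        if i = ⟨0, h0⟩ ∧ j = ⟨0, h0⟩ then (1/2 : ℝ)
        else if i = ⟨1, h1⟩ ∧ j = ⟨1, h1⟩ then (1/2 : ℝ)
        else if i = ⟨0, h0⟩ ∧ j = ⟨1, h1⟩ then 1 - (1/2 : ℝ)
        else if i = ⟨1, h1⟩ ∧ j = ⟨0, h0⟩ then 1 - (1/2 : ℝ)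
        else if i = j then 1 else 0], ?_, ?_⟩
    · intro P hP
      simp only [List.mem_singleton] at hP
      subst hP
      exact ⟨⟨0, h0⟩, ⟨1, h1⟩, by simp [Fin.lt_def], 1/2, ⟨by norm_num, by norm_num⟩, rfl⟩
    · funext i
      rw [List.prod_singleton]
      simp only [Matrix.mulVec, dotProduct]
      rw [Finset.sum_eq_single (⟨0, h0⟩ : Fin n) (fun b _ hb => by
          rw [if_neg (fun h => hb (Fin.ext h)), mul_zero]) (by simp)]
      simp only [Matrix.of_apply]
      split_ifs <;> simp_all [Fin.ext_iff] <;> norm_num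
  · -- membership
    subst hdhat
    refine ⟨1, Submonoid.one_mem _, ?_⟩
    rw [Matrix.conjTranspose_one, Matrix.one_mul, Matrix.mul_one]
    rw [trace_mul_special hn _ _ (suppP n), trace_mul_special hn _ _ (suppQ n),
        trace_mul_special hn _ _ (suppR n), trace_mul_special hn _ _ (suppS n)]
    funext k
    fin_cases k <;>
      norm_num [Pmat, Qmat, Rmat, Smat, Matrix.diagonal_apply, Fin.ext_iff]
  · -- non-membership
    rintro ⟨U, hU, h⟩
    set c : Fin n → ℂ := fun j => ((d j : ℝ) : ℂ) with hc_def
    have hc : ∀ k : Fin n, (k : ℕ) ≠ 0 → c k = 0 := fun k hk => by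
      simp [hc_def, hd, hk]
    have hc0 : c ⟨0, by omega⟩ = 1 := by simp [hc_def, hd]
    rw [trace_mul_special hn _ _ (suppP n), trace_mul_special hn _ _ (suppQ n),
        trace_mul_special hn _ _ (suppR n), trace_mul_special hn _ _ (suppS n)] at h
    simp only [B_entry hn U c hc, hc0, mul_one] at h
    set a : ℂ := U ⟨0, by omega⟩ ⟨0, by omega⟩ with ha
    set b : ℂ := U ⟨0, by omega⟩ ⟨1, by omega⟩ with hb
    have h0 := congrFun h 0
    have h1 := congrFun h 1
    have h2 := congrFun h 2
    have h3 := congrFun h 3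
    simp only [Matrix.cons_val_zero, Matrix.cons_val_one, Matrix.head_cons,
      Matrix.cons_val_two, Matrix.tail_cons, Matrix.cons_val_three] at h0 h1 h2 h3
    norm_num [Pmat, Qmat, Rmat, Smat, Fin.ext_iff, Complex.mul_re, Complex.add_re,
      Complex.sub_re, Complex.star_def, Complex.I_re, Complex.I_im] at h0 h1 h2 h3
    have key : (a.re * b.re + a.im * b.im)^2 + (a.re * b.im - a.im * b.re)^2
        = (a.re^2 + a.im^2) * (b.re^2 + b.im^2) := by ring
    nlinarith [h0, h1, h2, h3, key, sq_nonneg (a.re*b.re + a.im*b.im),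
      sq_nonneg (a.re*b.im - a.im*b.re)]
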